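/- Let X be a connected quandle, a ∈ X fixed, and let X̂ = Ker(ε : As(X) → ℤ) with quandle operation g◁h := e_a⁻¹ g h⁻¹ e_a h. Then the map p : X̂ → X, p(g) = a·g (action of As(X) on X), is a surjective quandle homomorphism and moreover a quandle covering: p(g) = p(h) implies k◁g = k◁h for all k ∈ X̂. -/

import Mathlib

/-- A quandle in the convention of the paper. -/
class PQuandle (X : Type*) where
  op : X → X → X
  op_self : ∀ a : X, op a a = a
  op_bij : ∀ a : X, Function.Bijective (fun x => op x a)
  op_distrib : ∀ a b c : X, op (op a b) c = op (op a c) (op b c)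

infixl:65 " ◁ " => PQuandle.op

namespace PQuandle

variable {X : Type*} [PQuandle X]

/-- The `n`-fold right operation `x ◁ⁿ y`. -/
def opn (x : X) (n : ℕ) (y : X) : X := (fun z => z ◁ y)^[n] x

/-- The right translation `(· ◁ y)` as a permutation of `X`. -/
noncomputable def act (y : X) : Equiv.Perm X := Equiv.ofBijective _ (op_bij y)

@[simp] lemma act_apply (y x : X) : act y x = x ◁ y := rfl

/-- The inner automorphism group `Inn(X)`. -/
noncomputable def Inn (X : Type*) [PQuandle X] : Subgroup (Equiv.Perm X) :=
  Subgroup.closure (Set.range (act (X := X)))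

/-- The relators `e_{x ◁ y}⁻¹ e_y⁻¹ e_x e_y` of the adjoint group. -/
def adjRels (X : Type*) [PQuandle X] : Set (FreeGroup X) :=
  { r | ∃ x y : X,
      r = (FreeGroup.of (x ◁ y))⁻¹ * (FreeGroup.of y)⁻¹ * FreeGroup.of x * FreeGroup.of y }

/-- The adjoint (enveloping) group `As(X)` of the quandle `X`. -/
def Adj (X : Type*) [PQuandle X] : Type _ := PresentedGroup (adjRels X)

instance : Group (Adj X) := by unfold Adj; infer_instance

/-- The generator `e_x` of `As(X)`. -/
def gen (x : X) : Adj X := PresentedGroup.of x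

lemma gen_rel (x y : X) : gen (x ◁ y) = (gen y)⁻¹ * gen x * gen y := by
  have h : ((FreeGroup.of (x ◁ y))⁻¹ * (FreeGroup.of y)⁻¹ * FreeGroup.of x * FreeGroup.of y :
      FreeGroup X) ∈ Subgroup.normalClosure (adjRels X) :=
    Subgroup.subset_normalClosure ⟨x, y, rfl⟩
  have h2 : ((gen (x ◁ y))⁻¹ * (gen y)⁻¹ * gen x * gen y : Adj X) = 1 := by
    have := (QuotientGroup.eq_one_iff
      (((FreeGroup.of (x ◁ y))⁻¹ * (FreeGroup.of y)⁻¹ * FreeGroup.of x * FreeGroup.of y :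
        FreeGroup X))).mpr h
    exact this
  calc gen (x ◁ y)
      = gen (x ◁ y) * ((gen (x ◁ y))⁻¹ * (gen y)⁻¹ * gen x * gen y) := by rw [h2, mul_one]
    _ = (gen y)⁻¹ * gen x * gen y := by group

lemma act_mul_act (x y : X) : act y * act x = act (x ◁ y) * act y := by
  ext z
  simp only [Equiv.Perm.mul_apply, act_apply]
  exact op_distrib z x y

/-- The homomorphism `As(X) → Perm(X)` sending `e_y` to the inverse of the right
translation by `y`; it encodes the right action of `As(X)` on `X`. -/
noncomputable def innHom : Adj X →* Equiv.Perm X :=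
  PresentedGroup.toGroup (f := fun y : X => (act y)⁻¹) (by
    rintro r ⟨x, y, rfl⟩
    simp only [map_mul, map_inv, FreeGroup.lift_apply_of, inv_inv]
    have := act_mul_act x y
    calc act (x ◁ y) * act y * (act x)⁻¹ * (act y)⁻¹
        = (act y * act x) * (act x)⁻¹ * (act y)⁻¹ := by rw [this]
      _ = 1 := by group)

@[simp] lemma innHom_gen (y : X) : innHom (gen y) = (act y)⁻¹ :=
  PresentedGroup.toGroup.of _

/-- The right action of `As(X)` on `X`: `x · g`. -/
noncomputable def ract (x : X) (g : Adj X) : X := (innHom g)⁻¹ x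

@[simp] lemma ract_gen (x y : X) : ract x (gen y) = x ◁ y := by
  simp [ract]

lemma ract_mul (x : X) (g h : Adj X) : ract x (g * h) = ract (ract x g) h := by
  simp [ract, map_mul]

/-- A quandle is connected if the right action of `As(X)` on `X` is transitive. -/
def Connected (X : Type*) [PQuandle X] : Prop :=
  ∀ x y : X, ∃ g : Adj X, ract x g = y

/-- The homomorphism `ε : As(X) → ℤ` sending every generator `e_x` to `1`. -/
def eps : Adj X →* Multiplicative ℤ :=
  PresentedGroup.toGroup (f := fun _ : X => Multiplicative.ofAdd 1) (by
    rintro r ⟨x, y, rfl⟩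
    simp only [map_mul, map_inv, FreeGroup.lift_apply_of]
    group)

@[simp] lemma eps_gen (x : X) : eps (gen x) = Multiplicative.ofAdd 1 :=
  PresentedGroup.toGroup.of _

/-- The underlying set of the universal covering quandle: `Ker ε`. -/
def covOp (a : X) (g h : (eps (X := X)).ker) : (eps (X := X)).ker :=
  ⟨(gen a)⁻¹ * g.1 * (h.1)⁻¹ * gen a * h.1, by
    have hg : eps g.1 = 1 := g.2
    have hh : eps h.1 = 1 := h.2
    simp only [MonoidHom.mem_ker, map_mul, map_inv, hg, hh]
    group⟩

/-- `n`-fold covering operation. -/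
def covOpn (a : X) (g : (eps (X := X)).ker) (n : ℕ) (h : (eps (X := X)).ker) :
    (eps (X := X)).ker := (fun u => covOp a u h)^[n] g

/-- The right translation of the covering quandle as a permutation. -/
def covAct (a : X) (h : (eps (X := X)).ker) : Equiv.Perm (eps (X := X)).ker where
  toFun g := covOp a g h
  invFun g := ⟨gen a * g.1 * (h.1)⁻¹ * (gen a)⁻¹ * h.1, by
    have hg : eps g.1 = 1 := g.2
    have hh : eps h.1 = 1 := h.2
    simp only [MonoidHom.mem_ker, map_mul, map_inv, hg, hh]
    group⟩
  left_inv g := by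
    apply Subtype.ext
    simp only [covOp]
    group
  right_inv g := by
    apply Subtype.ext
    simp only [covOp]
    group

end PQuandle

/-
The generator map `X → As(X)` is equivariant for the action of `As(X)` on `X` and conjugation:
`e_{x·g} = g⁻¹ e_x g`. Hence `h⁻¹ e_a h = e_{a·h}`, so the covering operation reads
`g ◁ h = e_a⁻¹ g e_{p(h)}`, which depends on `h` only through `p(h)`: this is the covering property,
and applying `p` gives `p(g ◁ h) = (a · e_a⁻¹ g) ◁ p(h) = p(g) ◁ p(h)` since `e_a` fixes `a`.
Surjectivity comes from connectedness, correcting `ε` by a power of `e_a`.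
-/

namespace PQuandle

variable {X : Type*} [PQuandle X]

theorem Adj.induction_on {P : Adj X → Prop} (g : Adj X) (one : P 1) (gen : ∀ x, P (gen x))
    (mul : ∀ g h, P g → P h → P (g * h)) (inv : ∀ g, P g → P g⁻¹) : P g :=
  PresentedGroup.generated_by (adjRels X)
    { carrier := {g | P g}, one_mem' := one, mul_mem' := mul _ _, inv_mem' := inv _ } gen g

@[simp] lemma ract_one (x : X) : ract x 1 = x := by simp [ract]

@[simp] lemma ract_ract_inv (x : X) (g : Adj X) : ract (ract x g) g⁻¹ = x := by
  rw [← ract_mul, mul_inv_cancel, ract_one]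

@[simp] lemma ract_inv_ract (x : X) (g : Adj X) : ract (ract x g⁻¹) g = x := by
  simpa using ract_ract_inv x g⁻¹

lemma gen_ract (g : Adj X) (x : X) : gen (ract x g) = g⁻¹ * gen x * g := by
  induction g using Adj.induction_on generalizing x with
  | one => simp
  | gen z => rw [ract_gen, gen_rel]
  | mul g h hg hh => rw [ract_mul, hh, hg]; group
  | inv g hg =>
    have hx := hg (ract x g⁻¹)
    rw [ract_inv_ract] at hx
    rw [hx]; group

lemma ract_zpow_gen_self (a : X) (n : ℤ) : ract a (gen a ^ n) = a := by
  have hfix : Function.IsFixedPt (act a) a := op_self a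
  rw [ract, map_zpow, innHom_gen, ← zpow_neg, inv_zpow', neg_neg]
  exact hfix.perm_zpow n

lemma coe_covOp (a : X) (g h : (eps (X := X)).ker) :
    (covOp a g h : Adj X) = (gen a)⁻¹ * g * gen (ract a h) := by
  rw [gen_ract]
  simp only [covOp]
  group

lemma exists_mem_ker_eps_ract_eq (hconn : Connected X) (a y : X) :
    ∃ g ∈ (eps (X := X)).ker, ract a g = y := by
  obtain ⟨g, hg⟩ := hconn a y
  refine ⟨gen a ^ (-Multiplicative.toAdd (eps g)) * g, ?_, ?_⟩
  · rw [MonoidHom.mem_ker, map_mul, map_zpow, eps_gen]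
    apply Multiplicative.toAdd.injective
    simp
  · rw [ract_mul, ract_zpow_gen_self, hg]

end PQuandle

open PQuandle in
/-- The map `p : X̂ → X`, `p(g) = a · g`, is a surjective quandle homomorphism and
a quandle covering. -/
theorem stmt15 (X : Type*) [PQuandle X] (hconn : Connected X) (a : X) :
    Function.Surjective (fun g : (eps (X := X)).ker => ract a g.1) ∧
    (∀ g h : (eps (X := X)).ker, ract a (covOp a g h).1 = (ract a g.1) ◁ (ract a h.1)) ∧
    (∀ g h k : (eps (X := X)).ker, ract a g.1 = ract a h.1 → covOp a k g = covOp a k h) := by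
  refine ⟨fun y => ?_, fun g h => ?_, fun g h k hp => ?_⟩
  · obtain ⟨g, hg, rfl⟩ := exists_mem_ker_eps_ract_eq hconn a y
    exact ⟨⟨g, hg⟩, rfl⟩
  · rw [coe_covOp, ract_mul, ract_mul, ract_gen, ← zpow_neg_one, ract_zpow_gen_self]
  · apply Subtype.ext
    rw [coe_covOp, coe_covOp, hp]
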